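/- arXiv:math/0611833 — 2 statements merged into one kernel-verified Lean document; each statement's English description precedes it below -/
import Mathlib

section
/- Let G be an amenable locally compact group, 1 < p < ∞, and let (d_α) be an approximate diagonal for L_1(G) of bound 1, with d_α = Σ_k a_k^{(α)} ⊗ b_k^{(α)}. Define Q : B(L_p(G)) → B(L_p(G)) as a weak limit of T ↦ Σ_k ρ_p(a_k^{(α)}) T ρ_p(b_k^{(α)}). Then for every n, every matrix T = (T_{ij}) ∈ M_n(B(L_p(G))), every (x_j)_{j=1}^n ⊆ L_p(G) and (μ_i)_{i=1}^n ⊆ L_{p'}(G), one has |Σ_{i,j} ⟨μ_i, Q(T_{ij})(x_j)⟩| ≤ ‖T‖_n (Σ_i ‖μ_i‖^{p'})^{1/p'} (Σ_j ‖x_j‖^p)^{1/p}, where ‖T‖_n is the norm of T on ℓ_p^n(L_p(G)); in particular Q is completely contractive in the p-operator space sense. -/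
open MeasureTheory NormedSpace Filter Topology
open scoped ENNReal

/-!
Each approximant `Σ_k ρ(a_k) T_{ij} ρ(b_k)` is a norm-convergent sum of two-sided multiplications
of the matrix `T`. For a single term, `ρ(b_k)` scales `(x_j)` in `ℓ_p^n`, `T` acts with norm
`≤ C`, and Hölder's inequality pairs the result with `ρ(a_k)^*(m_i)` in `ℓ_{p'}^n`, giving the bound
`‖a_k‖ ‖b_k‖ C ‖(m_i)‖_{p'} ‖(x_j)‖_p`. Summing over `k` costs the factor
`Σ_k ‖a_k‖ ‖b_k‖ ≤ 1`, and the bound survives the weak limit.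
-/

section FiniteLp

variable {𝕜 E : Type*} [NontriviallyNormedField 𝕜] [NormedAddCommGroup E] [NormedSpace 𝕜 E]
  {ι κ : Type*} [Fintype ι] [Fintype κ] {p q : ℝ}

lemma rpow_sum_norm_rpow_nonneg (p : ℝ) (x : κ → E) : 0 ≤ (∑ j, ‖x j‖ ^ p) ^ (1 / p) :=
  Real.rpow_nonneg (Finset.sum_nonneg fun _ _ => Real.rpow_nonneg (norm_nonneg _) _) _

lemma rpow_sum_norm_rpow_pos {x : κ → E} (hx : x ≠ 0) :
    0 < (∑ j, ‖x j‖ ^ p) ^ (1 / p) := by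
  obtain ⟨j, hj⟩ := Function.ne_iff.mp hx
  have hsum : 0 < ∑ j, ‖x j‖ ^ p :=
    Finset.sum_pos' (fun _ _ => Real.rpow_nonneg (norm_nonneg _) _)
      ⟨j, Finset.mem_univ j, Real.rpow_pos_of_pos (norm_pos_iff.mpr hj) p⟩
  exact Real.rpow_pos_of_pos hsum _

lemma rpow_sum_norm_rpow_map_le (hp : 0 < p) (S : E →L[𝕜] E) (x : κ → E) :
    (∑ j, ‖S (x j)‖ ^ p) ^ (1 / p) ≤ ‖S‖ * (∑ j, ‖x j‖ ^ p) ^ (1 / p) := by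
  have hsum : ∑ j, ‖S (x j)‖ ^ p ≤ ‖S‖ ^ p * ∑ j, ‖x j‖ ^ p := by
    rw [Finset.mul_sum]
    refine Finset.sum_le_sum fun j _ => ?_
    rw [← Real.mul_rpow (norm_nonneg _) (norm_nonneg _)]
    exact Real.rpow_le_rpow (norm_nonneg _) (S.le_opNorm _) hp.le
  calc (∑ j, ‖S (x j)‖ ^ p) ^ (1 / p)
      ≤ (‖S‖ ^ p * ∑ j, ‖x j‖ ^ p) ^ (1 / p) :=
        Real.rpow_le_rpow (Finset.sum_nonneg fun _ _ => Real.rpow_nonneg (norm_nonneg _) _)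
          hsum (by positivity)
    _ = ‖S‖ * (∑ j, ‖x j‖ ^ p) ^ (1 / p) := by
        rw [Real.mul_rpow (Real.rpow_nonneg (norm_nonneg _) _)
            (Finset.sum_nonneg fun _ _ => Real.rpow_nonneg (norm_nonneg _) _),
          ← Real.rpow_mul (norm_nonneg _), mul_one_div_cancel hp.ne', Real.rpow_one]

lemma nonneg_of_rpow_sum_norm_rpow_le {x : κ → E} (hx : x ≠ 0) {y : ι → E}
    {C : ℝ} (h : (∑ i, ‖y i‖ ^ p) ^ (1 / p) ≤ C * (∑ j, ‖x j‖ ^ p) ^ (1 / p)) : 0 ≤ C :=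
  nonneg_of_mul_nonneg_left ((rpow_sum_norm_rpow_nonneg p y).trans h)
    (rpow_sum_norm_rpow_pos hx)

lemma norm_sum_apply_comp_matrix_le (hpq : p.HolderConjugate q) (A B : E →L[𝕜] E)
    (T : ι → κ → E →L[𝕜] E) {C : ℝ} (hC : 0 ≤ C)
    (hT : ∀ ξ : κ → E, (∑ i, ‖∑ j, T i j (ξ j)‖ ^ p) ^ (1 / p) ≤ C * (∑ j, ‖ξ j‖ ^ p) ^ (1 / p))
    (x : κ → E) (m : ι → StrongDual 𝕜 E) :
    ‖∑ i, ∑ j, m i (A (T i j (B (x j))))‖ ≤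
      ‖A‖ * ‖B‖ * (C * (∑ i, ‖m i‖ ^ q) ^ (1 / q) * (∑ j, ‖x j‖ ^ p) ^ (1 / p)) := by
  set y : ι → E := fun i => ∑ j, T i j (B (x j))
  have hMq := rpow_sum_norm_rpow_nonneg q m
  have hy : (∑ i, ‖y i‖ ^ p) ^ (1 / p) ≤ C * (‖B‖ * (∑ j, ‖x j‖ ^ p) ^ (1 / p)) :=
    (hT fun j => B (x j)).trans
      (mul_le_mul_of_nonneg_left (rpow_sum_norm_rpow_map_le hpq.pos B x) hC)
  calc ‖∑ i, ∑ j, m i (A (T i j (B (x j))))‖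
      = ‖∑ i, m i (A (y i))‖ := by simp only [y, map_sum]
    _ ≤ ∑ i, ‖m i‖ * (‖A‖ * ‖y i‖) :=
        (norm_sum_le _ _).trans <| Finset.sum_le_sum fun i _ =>
          ((m i).le_opNorm _).trans (mul_le_mul_of_nonneg_left (A.le_opNorm _) (norm_nonneg _))
    _ = ‖A‖ * ∑ i, ‖m i‖ * ‖y i‖ := by
        rw [Finset.mul_sum]; exact Finset.sum_congr rfl fun i _ => by ring
    _ ≤ ‖A‖ * ((∑ i, ‖m i‖ ^ q) ^ (1 / q) * (∑ i, ‖y i‖ ^ p) ^ (1 / p)) :=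
        mul_le_mul_of_nonneg_left (Real.inner_le_Lp_mul_Lq_of_nonneg _ hpq.symm
          (fun _ _ => norm_nonneg _) fun _ _ => norm_nonneg _) (norm_nonneg _)
    _ ≤ ‖A‖ * ((∑ i, ‖m i‖ ^ q) ^ (1 / q) * (C * (‖B‖ * (∑ j, ‖x j‖ ^ p) ^ (1 / p)))) :=
        mul_le_mul_of_nonneg_left (mul_le_mul_of_nonneg_left hy hMq) (norm_nonneg _)
    _ = _ := by ring

end FiniteLp

section Approximants

variable {𝕜 E R : Type*} [NontriviallyNormedField 𝕜] [CompleteSpace 𝕜] [NormedAddCommGroup E]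
  [NormedSpace 𝕜 E] [SeminormedAddCommGroup R]
  {ρ : R → E →L[𝕜] E} (hρ : ∀ a, ‖ρ a‖ ≤ ‖a‖) {a b : ℕ → R}
  (hsum : Summable fun k => ‖a k‖ * ‖b k‖)
include hρ hsum

lemma summable_apply_rho_comp (m : StrongDual 𝕜 E) (S : E →L[𝕜] E) (x : E) :
    Summable fun k => m (ρ (a k) (S (ρ (b k) x))) := by
  refine Summable.of_norm_bounded (hsum.mul_left (‖m‖ * ‖S‖ * ‖x‖)) fun k => ?_
  calc ‖m (ρ (a k) (S (ρ (b k) x)))‖ ≤ ‖m‖ * (‖ρ (a k)‖ * (‖S‖ * (‖ρ (b k)‖ * ‖x‖))) := by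
        refine (m.le_opNorm _).trans (mul_le_mul_of_nonneg_left ?_ (norm_nonneg _))
        refine ((ρ (a k)).le_opNorm _).trans (mul_le_mul_of_nonneg_left ?_ (norm_nonneg _))
        exact (S.le_opNorm _).trans
          (mul_le_mul_of_nonneg_left ((ρ (b k)).le_opNorm _) (norm_nonneg _))
    _ ≤ ‖m‖ * (‖a k‖ * (‖S‖ * (‖b k‖ * ‖x‖))) := by gcongr <;> exact hρ _
    _ = ‖m‖ * ‖S‖ * ‖x‖ * (‖a k‖ * ‖b k‖) := by ring

lemma norm_sum_tsum_apply_rho_comp_le {ι κ : Type*} [Fintype ι] [Fintype κ] {p q : ℝ}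
    (hpq : p.HolderConjugate q) (T : ι → κ → E →L[𝕜] E) {C : ℝ} (hC : 0 ≤ C)
    (hT : ∀ ξ : κ → E, (∑ i, ‖∑ j, T i j (ξ j)‖ ^ p) ^ (1 / p) ≤ C * (∑ j, ‖ξ j‖ ^ p) ^ (1 / p))
    (x : κ → E) (m : ι → StrongDual 𝕜 E) :
    ‖∑ i, ∑ j, ∑' k, m i (ρ (a k) (T i j (ρ (b k) (x j))))‖ ≤
      (∑' k, ‖a k‖ * ‖b k‖) *
        (C * (∑ i, ‖m i‖ ^ q) ^ (1 / q) * (∑ j, ‖x j‖ ^ p) ^ (1 / p)) := by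
  have hswap : ∑ i, ∑ j, ∑' k, m i (ρ (a k) (T i j (ρ (b k) (x j)))) =
      ∑' k, ∑ i, ∑ j, m i (ρ (a k) (T i j (ρ (b k) (x j)))) := by
    have hs := fun i j => summable_apply_rho_comp hρ hsum (m i) (T i j) (x j)
    rw [Summable.tsum_finsetSum fun i _ => summable_sum fun j _ => hs i j]
    exact Finset.sum_congr rfl fun i _ => (Summable.tsum_finsetSum fun j _ => hs i j).symm
  rw [hswap]
  refine tsum_of_norm_bounded (hsum.hasSum.mul_right _) fun k => ?_
  refine (norm_sum_apply_comp_matrix_le hpq _ _ T hC hT x m).trans ?_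
  gcongr
  · exact hρ _
  · exact hρ _

end Approximants

theorem stmt_13_general (G : Type*) [MeasurableSpace G]
    (μ : Measure G)
    (p q : ℝ) (hpq : p.HolderConjugate q) [Fact (1 ≤ ENNReal.ofReal p)]
    -- `ρ_p : L¹(G) → B(L^p(G))` is norm-decreasing
    (ρ : Lp ℂ 1 μ → (Lp ℂ (ENNReal.ofReal p) μ →L[ℂ] Lp ℂ (ENNReal.ofReal p) μ))
    (hρ : ∀ a, ‖ρ a‖ ≤ ‖a‖)
    -- an approximate diagonal for `L¹(G)` of bound `1`
    (ι : Type*) (l : Filter ι) [l.NeBot] (a b : ι → ℕ → Lp ℂ 1 μ)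
    (hsum : ∀ α, Summable fun k => ‖a α k‖ * ‖b α k‖)
    (hbdd : ∀ α, (∑' k, ‖a α k‖ * ‖b α k‖) ≤ 1)
    -- `Q` is a weak limit of `T ↦ Σ_k ρ(a_k^{(α)}) T ρ(b_k^{(α)})`
    (Q : (Lp ℂ (ENNReal.ofReal p) μ →L[ℂ] Lp ℂ (ENNReal.ofReal p) μ) →
         (Lp ℂ (ENNReal.ofReal p) μ →L[ℂ] Lp ℂ (ENNReal.ofReal p) μ))
    (hQ : ∀ (S : Lp ℂ (ENNReal.ofReal p) μ →L[ℂ] Lp ℂ (ENNReal.ofReal p) μ)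
        (m : StrongDual ℂ (Lp ℂ (ENNReal.ofReal p) μ)) (x : Lp ℂ (ENNReal.ofReal p) μ),
      Tendsto (fun α => ∑' k, m (ρ (a α k) (S (ρ (b α k) x)))) l (𝓝 (m (Q S x))))
    (n : ℕ)
    (T : Matrix (Fin n) (Fin n)
      (Lp ℂ (ENNReal.ofReal p) μ →L[ℂ] Lp ℂ (ENNReal.ofReal p) μ))
    (C : ℝ)
    -- `‖T‖_n ≤ C` on `ℓ_p^n(L^p(G))`
    (hT : ∀ ξ : Fin n → Lp ℂ (ENNReal.ofReal p) μ,
      (∑ i, ‖∑ j, T i j (ξ j)‖ ^ p) ^ (1 / p) ≤ C * (∑ j, ‖ξ j‖ ^ p) ^ (1 / p)) :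
    ∀ (x : Fin n → Lp ℂ (ENNReal.ofReal p) μ)
      (m : Fin n → StrongDual ℂ (Lp ℂ (ENNReal.ofReal p) μ)),
      ‖∑ i, ∑ j, m i (Q (T i j) (x j))‖
        ≤ C * (∑ i, ‖m i‖ ^ q) ^ (1 / q) * (∑ j, ‖x j‖ ^ p) ^ (1 / p) := by
  intro x m
  rcases eq_or_ne x 0 with rfl | hx
  · simp [hpq.pos.ne']
  have hC : 0 ≤ C := nonneg_of_rpow_sum_norm_rpow_le hx (hT x)
  have hK : 0 ≤ C * (∑ i, ‖m i‖ ^ q) ^ (1 / q) * (∑ j, ‖x j‖ ^ p) ^ (1 / p) :=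
    mul_nonneg (mul_nonneg hC (rpow_sum_norm_rpow_nonneg q m)) (rpow_sum_norm_rpow_nonneg p x)
  have hlim := tendsto_finsetSum Finset.univ fun i _ =>
    tendsto_finsetSum Finset.univ fun j _ => hQ (T i j) (m i) (x j)
  refine le_of_tendsto' hlim.norm fun α => ?_
  calc _ ≤ (∑' k, ‖a α k‖ * ‖b α k‖) * _ :=
        norm_sum_tsum_apply_rho_comp_le hρ (hsum α) hpq T hC hT x m
    _ ≤ _ := mul_le_of_le_one_left hK (hbdd α)

/-- The quasi-expectation `Q` on `B(L^p(G))` built from an approximate diagonal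
of bound `1` for `L¹(G)` via the (norm-decreasing) right regular representation
`ρ_p` is `p`-completely contractive: for any matrix `T = (T_{ij})` acting on
`ℓ_p^n(L^p(G))` with norm at most `C`, vectors `(x_j)` and functionals `(m_i)`,
`|Σ_{i,j} ⟨m_i, Q(T_{ij}) x_j⟩| ≤ C (Σ_i ‖m_i‖^{p'})^{1/p'} (Σ_j ‖x_j‖^p)^{1/p}`. -/
theorem stmt_13 (G : Type*) [Group G] [TopologicalSpace G] [IsTopologicalGroup G]
    [LocallyCompactSpace G] [MeasurableSpace G] [BorelSpace G]
    (μ : Measure G) [μ.IsHaarMeasure]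
    (p q : ℝ) (hpq : p.HolderConjugate q) [Fact (1 ≤ ENNReal.ofReal p)]
    -- `ρ_p : L¹(G) → B(L^p(G))` is norm-decreasing
    (ρ : Lp ℂ 1 μ → (Lp ℂ (ENNReal.ofReal p) μ →L[ℂ] Lp ℂ (ENNReal.ofReal p) μ))
    (hρ : ∀ a, ‖ρ a‖ ≤ ‖a‖)
    -- an approximate diagonal for `L¹(G)` of bound `1`
    (ι : Type*) (l : Filter ι) [l.NeBot] (a b : ι → ℕ → Lp ℂ 1 μ)
    (hsum : ∀ α, Summable fun k => ‖a α k‖ * ‖b α k‖)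
    (hbdd : ∀ α, (∑' k, ‖a α k‖ * ‖b α k‖) ≤ 1)
    -- `Q` is a weak limit of `T ↦ Σ_k ρ(a_k^{(α)}) T ρ(b_k^{(α)})`
    (Q : (Lp ℂ (ENNReal.ofReal p) μ →L[ℂ] Lp ℂ (ENNReal.ofReal p) μ) →
         (Lp ℂ (ENNReal.ofReal p) μ →L[ℂ] Lp ℂ (ENNReal.ofReal p) μ))
    (hQ : ∀ (S : Lp ℂ (ENNReal.ofReal p) μ →L[ℂ] Lp ℂ (ENNReal.ofReal p) μ)
        (m : StrongDual ℂ (Lp ℂ (ENNReal.ofReal p) μ)) (x : Lp ℂ (ENNReal.ofReal p) μ),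
      Tendsto (fun α => ∑' k, m (ρ (a α k) (S (ρ (b α k) x)))) l (𝓝 (m (Q S x))))
    (n : ℕ)
    (T : Matrix (Fin n) (Fin n)
      (Lp ℂ (ENNReal.ofReal p) μ →L[ℂ] Lp ℂ (ENNReal.ofReal p) μ))
    (C : ℝ)
    -- `‖T‖_n ≤ C` on `ℓ_p^n(L^p(G))`
    (hT : ∀ ξ : Fin n → Lp ℂ (ENNReal.ofReal p) μ,
      (∑ i, ‖∑ j, T i j (ξ j)‖ ^ p) ^ (1 / p) ≤ C * (∑ j, ‖ξ j‖ ^ p) ^ (1 / p)) :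
    ∀ (x : Fin n → Lp ℂ (ENNReal.ofReal p) μ)
      (m : Fin n → StrongDual ℂ (Lp ℂ (ENNReal.ofReal p) μ)),
      ‖∑ i, ∑ j, m i (Q (T i j) (x j))‖
        ≤ C * (∑ i, ‖m i‖ ^ q) ^ (1 / q) * (∑ j, ‖x j‖ ^ p) ^ (1 / p) :=
  stmt_13_general G μ p q hpq ρ hρ ι l a b hsum hbdd Q hQ n T C hT
end

section
/- Let 1 < p < ∞, let X be a finite-dimensional subspace of B(L_p(φ)) for some measure φ, and suppose that for every n and every x₁,…,x_n ∈ X one has (Σ_k ‖x_k‖^p)^{1/p} = sup{(Σ_k ‖x_k(w)‖^p)^{1/p} : w ∈ L_p(φ), ‖w‖ ≤ 1}. Then for every ε > 0 there exists w ∈ L_p(φ) with ‖w‖ = 1 such that the evaluation map T : X → L_p(φ), T(x) = x(w), satisfies (1 − 2ε)‖x‖ ≤ ‖T(x)‖ ≤ ‖x‖ for all x ∈ X. -/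
open MeasureTheory
open scoped ENNReal

/-- Extracting a finite ε-net inside a totally bounded set. -/
theorem stmt_16_net {α : Type*} [MetricSpace α] {s : Set α} (h : TotallyBounded s)
    {ε : ℝ} (hε : 0 < ε) :
    ∃ t ⊆ s, t.Finite ∧ s ⊆ ⋃ y ∈ t, Metric.ball y ε := by
  obtain ⟨t, hts, hf, hc⟩ := totallyBounded_iff_subset.mp h _ (Metric.dist_mem_uniformity hε)
  exact ⟨t, hts, hf, by simpa [Metric.ball, dist_comm] using hc⟩

set_option synthInstance.maxHeartbeats 1000000 in
set_option maxHeartbeats 2000000 in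
/-- If `X` is a finite-dimensional subspace of `B(L^p(φ))` on which the column
norms satisfy `‖(x_k)‖_{M_{n,1}(X)} = (Σ_k ‖x_k‖^p)^{1/p}`, i.e. for all finite
families the ℓ_p-sum of norms is the least upper bound of
`(Σ_k ‖x_k(w)‖^p)^{1/p}` over `‖w‖ ≤ 1`, then for every `ε > 0` there is a
norm-one `w` such that evaluation at `w` satisfies
`(1−2ε)‖x‖ ≤ ‖x(w)‖ ≤ ‖x‖` for all `x ∈ X`. -/
theorem stmt_16 (Ω : Type*) [MeasurableSpace Ω] (φ : Measure Ω)
    (p : ℝ) (hp : 1 < p) [Fact (1 ≤ ENNReal.ofReal p)]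
    [Nontrivial (Lp ℂ (ENNReal.ofReal p) φ)]
    (X : Subspace ℂ (Lp ℂ (ENNReal.ofReal p) φ →L[ℂ] Lp ℂ (ENNReal.ofReal p) φ))
    [FiniteDimensional ℂ X]
    (hX : ∀ (n : ℕ) (x : Fin n → X),
      IsLUB {r : ℝ | ∃ w : Lp ℂ (ENNReal.ofReal p) φ, ‖w‖ ≤ 1 ∧
          r = (∑ k, ‖(x k : Lp ℂ (ENNReal.ofReal p) φ →L[ℂ] Lp ℂ (ENNReal.ofReal p) φ) w‖ ^ p) ^ (1 / p)}
        ((∑ k, ‖x k‖ ^ p) ^ (1 / p))) :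
    ∀ ε : ℝ, 0 < ε →
      ∃ w : Lp ℂ (ENNReal.ofReal p) φ, ‖w‖ = 1 ∧
        ∀ x : X,
          (1 - 2 * ε) * ‖x‖
            ≤ ‖(x : Lp ℂ (ENNReal.ofReal p) φ →L[ℂ] Lp ℂ (ENNReal.ofReal p) φ) w‖ ∧
          ‖(x : Lp ℂ (ENNReal.ofReal p) φ →L[ℂ] Lp ℂ (ENNReal.ofReal p) φ) w‖ ≤ ‖x‖ := by
  classical
  intro ε hε
  have hp0 : (0:ℝ) < p := lt_trans one_pos hp
  have hpne : p ≠ 0 := ne_of_gt hp0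
  obtain ⟨w₀, hw₀⟩ : ∃ w : Lp ℂ (ENNReal.ofReal p) φ, ‖w‖ = 1 :=
    exists_norm_eq _ zero_le_one
  have upper : ∀ w : Lp ℂ (ENNReal.ofReal p) φ, ‖w‖ = 1 → ∀ x : X,
      ‖(x : Lp ℂ (ENNReal.ofReal p) φ →L[ℂ] Lp ℂ (ENNReal.ofReal p) φ) w‖ ≤ ‖x‖ := by
    intro w hw x
    calc ‖(x : Lp ℂ (ENNReal.ofReal p) φ →L[ℂ] Lp ℂ (ENNReal.ofReal p) φ) w‖
        ≤ ‖(x : Lp ℂ (ENNReal.ofReal p) φ →L[ℂ] Lp ℂ (ENNReal.ofReal p) φ)‖ * ‖w‖ :=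
          ContinuousLinearMap.le_opNorm _ w
      _ = ‖x‖ := by rw [hw, mul_one, ← Submodule.coe_norm]
  by_cases hε2 : (1:ℝ)/2 ≤ ε
  · refine ⟨w₀, hw₀, fun x => ⟨?_, upper w₀ hw₀ x⟩⟩
    have h1 : (1 - 2*ε) * ‖x‖ ≤ 0 :=
      mul_nonpos_of_nonpos_of_nonneg (by linarith) (norm_nonneg _)
    exact h1.trans (norm_nonneg _)
  push_neg at hε2
  rcases subsingleton_or_nontrivial X with hS | hN
  · refine ⟨w₀, hw₀, fun x => ⟨?_, upper w₀ hw₀ x⟩⟩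
    have hx : x = 0 := Subsingleton.elim x 0
    subst hx
    simp
  -- main case
  have hcpt : IsCompact (Metric.sphere (0:X) 1) := isCompact_sphere 0 1
  obtain ⟨t, hts, htfin, hcov⟩ := stmt_16_net hcpt.totallyBounded hε
  have hsne : (Metric.sphere (0:X) 1).Nonempty := NormedSpace.sphere_nonempty.mpr zero_le_one
  have htne : t.Nonempty := by
    obtain ⟨u, hu⟩ := hsne
    obtain ⟨y, hy, -⟩ := Set.mem_iUnion₂.mp (hcov hu)
    exact ⟨y, hy⟩
  set tf : Finset X := htfin.toFinset with htf
  have htfne : tf.Nonempty := by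
    obtain ⟨y, hy⟩ := htne
    exact ⟨y, htfin.mem_toFinset.mpr hy⟩
  set n : ℕ := tf.card with hncard
  have hn : 0 < n := Finset.card_pos.mpr htfne
  set e : {x // x ∈ tf} ≃ Fin n := tf.equivFin with he
  set xs : Fin n → X := fun i => ((e.symm i : {x // x ∈ tf}) : X) with hxs
  have hxt : ∀ i, xs i ∈ t := fun i => htfin.mem_toFinset.mp (e.symm i).2
  have hxnorm : ∀ i, ‖xs i‖ = 1 := fun i => by
    have := hts (hxt i)
    simpa [mem_sphere_zero_iff_norm] using this
  have hlub := hX n xs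
  have hsum1 : (∑ k, ‖xs k‖ ^ p) = (n : ℝ) := by
    rw [Finset.sum_congr rfl (fun k _ => by rw [hxnorm k, Real.one_rpow])]
    simp
  set A : ℝ := 1 - (1 - ε) ^ p with hA
  have hApos : 0 < A := by
    have : (1 - ε : ℝ) ^ p < 1 := Real.rpow_lt_one (by linarith) (by linarith) hp0
    simp only [hA]; linarith
  have hAle : A ≤ 1 := by
    have : (0:ℝ) ≤ (1 - ε) ^ p := Real.rpow_nonneg (by linarith) p
    simp only [hA]; linarith
  have hnA : (0:ℝ) ≤ (n:ℝ) - A := by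
    have : (1:ℝ) ≤ (n:ℝ) := by exact_mod_cast hn
    linarith
  have hb : ((n:ℝ) - A) ^ (1/p) < (∑ k, ‖xs k‖ ^ p) ^ (1/p) := by
    rw [hsum1]
    exact Real.rpow_lt_rpow hnA (by linarith) (one_div_pos.mpr hp0)
  obtain ⟨c, hcS, hbc, -⟩ := hlub.exists_between hb
  obtain ⟨w, hw1, rfl⟩ := hcS
  set s : ℝ := ∑ k, ‖(xs k : Lp ℂ (ENNReal.ofReal p) φ →L[ℂ] Lp ℂ (ENNReal.ofReal p) φ) w‖ ^ p
    with hs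
  have hsnn : 0 ≤ s := Finset.sum_nonneg fun k _ => Real.rpow_nonneg (norm_nonneg _) p
  have hslow : (n:ℝ) - A < s := by
    have h := Real.rpow_lt_rpow (Real.rpow_nonneg hnA _) hbc hp0
    rwa [one_div, Real.rpow_inv_rpow hnA hpne, Real.rpow_inv_rpow hsnn hpne] at h
  have hterm : ∀ k : Fin n,
      ‖(xs k : Lp ℂ (ENNReal.ofReal p) φ →L[ℂ] Lp ℂ (ENNReal.ofReal p) φ) w‖ ^ p ≤ 1 := by
    intro k
    have h1 : ‖(xs k : Lp ℂ (ENNReal.ofReal p) φ →L[ℂ] Lp ℂ (ENNReal.ofReal p) φ) w‖ ≤ 1 := by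
      calc ‖(xs k : Lp ℂ (ENNReal.ofReal p) φ →L[ℂ] Lp ℂ (ENNReal.ofReal p) φ) w‖
          ≤ ‖(xs k : Lp ℂ (ENNReal.ofReal p) φ →L[ℂ] Lp ℂ (ENNReal.ofReal p) φ)‖ * ‖w‖ :=
            ContinuousLinearMap.le_opNorm _ w
        _ ≤ 1 * 1 := by
            apply mul_le_mul _ hw1 (norm_nonneg _) zero_le_one
            rw [← Submodule.coe_norm, hxnorm k]
        _ = 1 := mul_one 1
    exact Real.rpow_le_one (norm_nonneg _) h1 hp0.le
  have hkey : ∀ k : Fin n,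
      (1 - ε) < ‖(xs k : Lp ℂ (ENNReal.ofReal p) φ →L[ℂ] Lp ℂ (ENNReal.ofReal p) φ) w‖ := by
    intro k
    have herase : ∑ j ∈ Finset.univ.erase k,
        ‖(xs j : Lp ℂ (ENNReal.ofReal p) φ →L[ℂ] Lp ℂ (ENNReal.ofReal p) φ) w‖ ^ p
        ≤ (n:ℝ) - 1 := by
      calc ∑ j ∈ Finset.univ.erase k,
          ‖(xs j : Lp ℂ (ENNReal.ofReal p) φ →L[ℂ] Lp ℂ (ENNReal.ofReal p) φ) w‖ ^ p
          ≤ (Finset.univ.erase k).card • (1:ℝ) :=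
            Finset.sum_le_card_nsmul _ _ 1 (fun j _ => hterm j)
        _ = ((n - 1 : ℕ) : ℝ) := by
            rw [Finset.card_erase_of_mem (Finset.mem_univ k), Finset.card_univ,
              Fintype.card_fin, nsmul_eq_mul, mul_one]
        _ ≤ (n:ℝ) - 1 := by
            rw [Nat.cast_sub hn]; simp
    have hsplit : ∑ j ∈ Finset.univ.erase k,
        ‖(xs j : Lp ℂ (ENNReal.ofReal p) φ →L[ℂ] Lp ℂ (ENNReal.ofReal p) φ) w‖ ^ p
        + ‖(xs k : Lp ℂ (ENNReal.ofReal p) φ →L[ℂ] Lp ℂ (ENNReal.ofReal p) φ) w‖ ^ p = s :=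
      Finset.sum_erase_add _ _ (Finset.mem_univ k)
    have hpk : (1 - ε) ^ p <
        ‖(xs k : Lp ℂ (ENNReal.ofReal p) φ →L[ℂ] Lp ℂ (ENNReal.ofReal p) φ) w‖ ^ p := by
      have : (1 - ε) ^ p = 1 - A := by simp [hA]
      rw [this]; linarith
    by_contra hcon
    push_neg at hcon
    have := Real.rpow_le_rpow (norm_nonneg _) hcon hp0.le
    linarith
  -- w ≠ 0 and normalization
  have hwpos : 0 < ‖w‖ := by
    rcases eq_or_lt_of_le (norm_nonneg w) with h | h
    · exfalso
      have hw0 : w = 0 := by rwa [eq_comm, norm_eq_zero] at h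
      have := hkey ⟨0, hn⟩
      rw [hw0] at this
      simp at this
      linarith
    · exact h
  set wn : Lp ℂ (ENNReal.ofReal p) φ := ((‖w‖⁻¹ : ℝ) : ℂ) • w with hwn
  have hwnnorm : ‖wn‖ = 1 := by
    rw [hwn, norm_smul, Complex.norm_real, Real.norm_eq_abs,
      abs_of_pos (inv_pos.mpr hwpos), inv_mul_cancel₀ (ne_of_gt hwpos)]
  have hinv1 : (1:ℝ) ≤ ‖w‖⁻¹ := (one_le_inv₀ hwpos).mpr hw1
  have heval : ∀ y : X,
      ‖(y : Lp ℂ (ENNReal.ofReal p) φ →L[ℂ] Lp ℂ (ENNReal.ofReal p) φ) wn‖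
      = ‖w‖⁻¹ * ‖(y : Lp ℂ (ENNReal.ofReal p) φ →L[ℂ] Lp ℂ (ENNReal.ofReal p) φ) w‖ := by
    intro y
    rw [hwn, ContinuousLinearMap.map_smul, norm_smul, Complex.norm_real, Real.norm_eq_abs,
      abs_of_pos (inv_pos.mpr hwpos)]
  have hkeyn : ∀ k : Fin n,
      (1 - ε) < ‖(xs k : Lp ℂ (ENNReal.ofReal p) φ →L[ℂ] Lp ℂ (ENNReal.ofReal p) φ) wn‖ := by
    intro k
    have h1 := hkey k
    have h2 := heval (xs k)
    nlinarith [norm_nonneg ((xs k : Lp ℂ (ENNReal.ofReal p) φ →L[ℂ] Lp ℂ (ENNReal.ofReal p) φ) w)]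
  refine ⟨wn, hwnnorm, fun x => ⟨?_, upper wn hwnnorm x⟩⟩
  by_cases hx0 : x = 0
  · subst hx0; simp
  have hxpos : 0 < ‖x‖ := norm_pos_iff.mpr hx0
  set u : X := ((‖x‖⁻¹ : ℝ) : ℂ) • x with hu
  have hunorm : ‖u‖ = 1 := by
    have hcoe : (u : Lp ℂ (ENNReal.ofReal p) φ →L[ℂ] Lp ℂ (ENNReal.ofReal p) φ)
        = ((‖x‖⁻¹ : ℝ) : ℂ) • (x : Lp ℂ (ENNReal.ofReal p) φ →L[ℂ] Lp ℂ (ENNReal.ofReal p) φ) :=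
      rfl
    have h := norm_smul ((‖x‖⁻¹ : ℝ) : ℂ)
      (x : Lp ℂ (ENNReal.ofReal p) φ →L[ℂ] Lp ℂ (ENNReal.ofReal p) φ)
    rw [Submodule.coe_norm, hcoe, h, Complex.norm_real, Real.norm_eq_abs,
      abs_of_pos (inv_pos.mpr hxpos), ← Submodule.coe_norm, inv_mul_cancel₀ (ne_of_gt hxpos)]
  have husphere : u ∈ Metric.sphere (0:X) 1 := by
    simpa [mem_sphere_zero_iff_norm] using hunorm
  obtain ⟨y, hy, hball⟩ := Set.mem_iUnion₂.mp (hcov husphere)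
  have hdist : ‖u - y‖ < ε := by
    have := Metric.mem_ball.mp hball
    rwa [dist_eq_norm] at this
  -- find index
  set k : Fin n := e ⟨y, htfin.mem_toFinset.mpr hy⟩ with hk
  have hxk : xs k = y := by
    simp [hxs, hk]
  -- bound ‖u wn‖ from below
  have hyn : (1 - ε) < ‖(y : Lp ℂ (ENNReal.ofReal p) φ →L[ℂ] Lp ℂ (ENNReal.ofReal p) φ) wn‖ := by
    have := hkeyn k
    rwa [hxk] at this
  have hdiff : ‖((u - y : X) : Lp ℂ (ENNReal.ofReal p) φ →L[ℂ] Lp ℂ (ENNReal.ofReal p) φ) wn‖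
      ≤ ‖u - y‖ := by
    calc ‖((u - y : X) : Lp ℂ (ENNReal.ofReal p) φ →L[ℂ] Lp ℂ (ENNReal.ofReal p) φ) wn‖
        ≤ ‖((u - y : X) : Lp ℂ (ENNReal.ofReal p) φ →L[ℂ] Lp ℂ (ENNReal.ofReal p) φ)‖ * ‖wn‖ :=
          ContinuousLinearMap.le_opNorm _ wn
      _ = ‖u - y‖ := by rw [hwnnorm, mul_one, ← Submodule.coe_norm]
  have hsub : ((u - y : X) : Lp ℂ (ENNReal.ofReal p) φ →L[ℂ] Lp ℂ (ENNReal.ofReal p) φ) wn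
      = (u : Lp ℂ (ENNReal.ofReal p) φ →L[ℂ] Lp ℂ (ENNReal.ofReal p) φ) wn
        - (y : Lp ℂ (ENNReal.ofReal p) φ →L[ℂ] Lp ℂ (ENNReal.ofReal p) φ) wn := by
    simp [Submodule.coe_sub, ContinuousLinearMap.sub_apply]
  have hulow : (1 - 2*ε) ≤ ‖(u : Lp ℂ (ENNReal.ofReal p) φ →L[ℂ] Lp ℂ (ENNReal.ofReal p) φ) wn‖ := by
    have htri : ‖(y : Lp ℂ (ENNReal.ofReal p) φ →L[ℂ] Lp ℂ (ENNReal.ofReal p) φ) wn‖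
        - ‖(u : Lp ℂ (ENNReal.ofReal p) φ →L[ℂ] Lp ℂ (ENNReal.ofReal p) φ) wn‖
        ≤ ‖(y : Lp ℂ (ENNReal.ofReal p) φ →L[ℂ] Lp ℂ (ENNReal.ofReal p) φ) wn
          - (u : Lp ℂ (ENNReal.ofReal p) φ →L[ℂ] Lp ℂ (ENNReal.ofReal p) φ) wn‖ :=
      norm_sub_norm_le _ _
    have : ‖(y : Lp ℂ (ENNReal.ofReal p) φ →L[ℂ] Lp ℂ (ENNReal.ofReal p) φ) wn
        - (u : Lp ℂ (ENNReal.ofReal p) φ →L[ℂ] Lp ℂ (ENNReal.ofReal p) φ) wn‖ < ε := by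
      rw [← norm_neg, neg_sub, ← hsub]
      exact lt_of_le_of_lt hdiff hdist
    linarith
  have hueval : ‖(u : Lp ℂ (ENNReal.ofReal p) φ →L[ℂ] Lp ℂ (ENNReal.ofReal p) φ) wn‖
      = ‖x‖⁻¹ * ‖(x : Lp ℂ (ENNReal.ofReal p) φ →L[ℂ] Lp ℂ (ENNReal.ofReal p) φ) wn‖ := by
    rw [hu]
    rw [show (((((‖x‖⁻¹ : ℝ) : ℂ)) • x : X) : Lp ℂ (ENNReal.ofReal p) φ →L[ℂ] Lp ℂ (ENNReal.ofReal p) φ)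
      = ((‖x‖⁻¹ : ℝ) : ℂ) • (x : Lp ℂ (ENNReal.ofReal p) φ →L[ℂ] Lp ℂ (ENNReal.ofReal p) φ) from rfl]
    rw [ContinuousLinearMap.smul_apply, norm_smul, Complex.norm_real, Real.norm_eq_abs,
      abs_of_pos (inv_pos.mpr hxpos)]
  have := hulow
  rw [hueval] at this
  calc (1 - 2*ε) * ‖x‖
      ≤ (‖x‖⁻¹ * ‖(x : Lp ℂ (ENNReal.ofReal p) φ →L[ℂ] Lp ℂ (ENNReal.ofReal p) φ) wn‖) * ‖x‖ :=
        mul_le_mul_of_nonneg_right this hxpos.le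
    _ = ‖(x : Lp ℂ (ENNReal.ofReal p) φ →L[ℂ] Lp ℂ (ENNReal.ofReal p) φ) wn‖ := by
        rw [mul_comm (‖x‖⁻¹) _, mul_assoc, inv_mul_cancel₀ (ne_of_gt hxpos), mul_one]
end
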